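/- (Existence of (p,q)-minimizers under uniform twist) Assume in addition that there exists δ > 0 with ∂₁∂₂h(ξ,η) ≤ -δ for all (ξ,η) ∈ ℝ². Then W_pq attains its global minimum on X_pq: there exists x ∈ X_pq with W_pq(x) ≤ W_pq(y) for all y ∈ X_pq. Moreover, every such global minimizer is a stationary configuration. -/

import Mathlib

/-- First partial derivative of the generating function. -/
noncomputable def pd1 (h : ℝ → ℝ → ℝ) (a b : ℝ) : ℝ := deriv (fun s => h s b) a

/-- Second partial derivative of the generating function. -/
noncomputable def pd2 (h : ℝ → ℝ → ℝ) (a b : ℝ) : ℝ := deriv (fun s => h a s) b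

/-- Mixed second partial derivative ∂₁∂₂h. -/
noncomputable def pd12 (h : ℝ → ℝ → ℝ) (a b : ℝ) : ℝ := deriv (fun s => pd2 h s b) a

/-- The space of (p,q)-configurations: x (n+q) = x n + p. -/
def IsConfig (p : ℤ) (q : ℕ) (x : ℤ → ℝ) : Prop := ∀ n : ℤ, x (n + (q : ℤ)) = x n + (p : ℝ)

/-- Stationary configuration: the gradient of the action vanishes. -/
def Stationary (h : ℝ → ℝ → ℝ) (x : ℤ → ℝ) : Prop :=
  ∀ k : ℤ, pd2 h (x (k - 1)) (x k) + pd1 h (x k) (x (k + 1)) = 0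

/-- The periodic action W_pq. -/
noncomputable def W (h : ℝ → ℝ → ℝ) (q : ℕ) (x : ℤ → ℝ) : ℝ :=
  ∑ k ∈ Finset.range q, h (x (k : ℤ)) (x ((k : ℤ) + 1))

open Function Set

section Deriv
variable {h : ℝ → ℝ → ℝ} (hC2 : ContDiff ℝ 2 (Function.uncurry h))
include hC2

lemma hdiff : Differentiable ℝ (uncurry h) := hC2.differentiable (by norm_num)

lemma hasDerivAt_slice1 (a b : ℝ) :
    HasDerivAt (fun s => h s b) (fderiv ℝ (uncurry h) (a, b) (1, 0)) a := by
  have hL : HasDerivAt (fun s : ℝ => (s, b)) ((1 : ℝ), (0 : ℝ)) a :=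
    (hasDerivAt_id a).prodMk (hasDerivAt_const a b)
  exact ((hdiff hC2 (a, b)).hasFDerivAt).comp_hasDerivAt a hL

lemma hasDerivAt_slice2 (a b : ℝ) :
    HasDerivAt (fun s => h a s) (fderiv ℝ (uncurry h) (a, b) (0, 1)) b := by
  have hL : HasDerivAt (fun s : ℝ => (a, s)) ((0 : ℝ), (1 : ℝ)) b :=
    (hasDerivAt_const b a).prodMk (hasDerivAt_id b)
  exact ((hdiff hC2 (a, b)).hasFDerivAt).comp_hasDerivAt b hL

lemma pd1_eq (a b : ℝ) : pd1 h a b = fderiv ℝ (uncurry h) (a, b) (1, 0) :=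
  (hasDerivAt_slice1 hC2 a b).deriv

lemma pd2_eq (a b : ℝ) : pd2 h a b = fderiv ℝ (uncurry h) (a, b) (0, 1) :=
  (hasDerivAt_slice2 hC2 a b).deriv

lemma hasDerivAt_h1 (a b : ℝ) : HasDerivAt (fun s => h s b) (pd1 h a b) a := by
  rw [pd1_eq hC2]; exact hasDerivAt_slice1 hC2 a b

lemma hasDerivAt_h2 (a b : ℝ) : HasDerivAt (fun s => h a s) (pd2 h a b) b := by
  rw [pd2_eq hC2]; exact hasDerivAt_slice2 hC2 a b

lemma contDiff_fderiv : ContDiff ℝ 1 (fderiv ℝ (uncurry h)) := hC2.fderiv_right (by norm_num)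

lemma continuous_pd2_pair : Continuous (fun ab : ℝ × ℝ => pd2 h ab.1 ab.2) := by
  have : Continuous (fun ab : ℝ × ℝ => fderiv ℝ (uncurry h) ab ((0 : ℝ), (1 : ℝ))) :=
    ((contDiff_fderiv hC2).clm_apply contDiff_const).continuous
  refine this.congr fun ab => ?_
  exact (pd2_eq hC2 ab.1 ab.2).symm

lemma contDiff_pd2_left (b : ℝ) : ContDiff ℝ 1 (fun s => pd2 h s b) := by
  have : ContDiff ℝ 1 (fun s : ℝ => fderiv ℝ (uncurry h) (s, b) ((0 : ℝ), (1 : ℝ))) :=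
    (((contDiff_fderiv hC2).comp (contDiff_id.prodMk contDiff_const)).clm_apply contDiff_const)
  have hfun : (fun s => pd2 h s b) = fun s : ℝ => fderiv ℝ (uncurry h) (s, b) ((0 : ℝ), (1 : ℝ)) :=
    funext fun s => pd2_eq hC2 s b
  rw [hfun]; exact this

lemma hasDerivAt_pd2 (a b : ℝ) : HasDerivAt (fun s => pd2 h s b) (pd12 h a b) a :=
  (((contDiff_pd2_left hC2 b).differentiable (by norm_num)) a).hasDerivAt

lemma hasDerivAt_line (a b c1 c2 : ℝ) :
    HasDerivAt (fun t => h (a + t * c1) (b + t * c2))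
      (c1 * pd1 h a b + c2 * pd2 h a b) 0 := by
  have hL : HasDerivAt (fun t : ℝ => (a + t * c1, b + t * c2)) ((c1 : ℝ), (c2 : ℝ)) 0 := by
    simpa using (((hasDerivAt_id (0:ℝ)).mul_const c1).const_add a).prodMk
      (((hasDerivAt_id (0:ℝ)).mul_const c2).const_add b)
  have := ((hdiff hC2 (a + 0 * c1, b + 0 * c2)).hasFDerivAt).comp_hasDerivAt 0 hL
  simp only [zero_mul, add_zero] at this
  have heq : fderiv ℝ (uncurry h) (a, b) (c1, c2)
      = c1 * pd1 h a b + c2 * pd2 h a b := by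
    rw [pd1_eq hC2, pd2_eq hC2]
    have : (c1, c2) = c1 • ((1 : ℝ), (0 : ℝ)) + c2 • ((0 : ℝ), (1 : ℝ)) := by
      simp [Prod.ext_iff]
    rw [this, map_add, map_smul, map_smul]; simp
  rwa [heq] at this

end Deriv

section Per
variable {h : ℝ → ℝ → ℝ} (hper : ∀ a b : ℝ, h (a + 1) (b + 1) = h a b)
include hper

lemma hshift (m : ℤ) (a b : ℝ) : h (a + m) (b + m) = h a b := by
  induction m using Int.induction_on with
  | zero => simp
  | succ n ih =>
    push_cast at ih ⊢
    have h1 := hper (a + n) (b + n)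
    rw [show a + ((n : ℝ) + 1) = (a + n) + 1 by ring, show b + ((n : ℝ) + 1) = (b + n) + 1 by ring,
      h1]
    exact ih
  | pred n ih =>
    push_cast at ih ⊢
    have h1 := hper (a + (-(n : ℝ) - 1)) (b + (-(n : ℝ) - 1))
    rw [show a + (-(n : ℝ) - 1) + 1 = a + -(n : ℝ) by ring,
      show b + (-(n : ℝ) - 1) + 1 = b + -(n : ℝ) by ring, ih] at h1
    exact h1.symm

lemma pd1_shift (m : ℤ) (a b : ℝ) : pd1 h (a + m) (b + m) = pd1 h a b := by
  have hfun : (fun s => h s (b + m)) = fun s => h (s - m) b := by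
    funext s
    have := hshift hper m (s - m) b
    rw [sub_add_cancel] at this
    exact this
  show deriv (fun s => h s (b + m)) (a + m) = pd1 h a b
  calc deriv (fun s => h s (b + m)) (a + m)
      = deriv (fun s => h (s - m) b) (a + m) := by rw [hfun]
    _ = deriv (fun u => h u b) (a + m - m) := deriv_comp_sub_const (fun u => h u b) (m : ℝ) (a + m)
    _ = pd1 h a b := by rw [add_sub_cancel_right]; rfl

lemma pd2_shift (m : ℤ) (a b : ℝ) : pd2 h (a + m) (b + m) = pd2 h a b := by
  have hfun : (fun s => h (a + m) s) = fun s => h a (s - m) := by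
    funext s
    have := hshift hper m a (s - m)
    rw [sub_add_cancel] at this
    exact this
  show deriv (fun s => h (a + m) s) (b + m) = pd2 h a b
  calc deriv (fun s => h (a + m) s) (b + m)
      = deriv (fun s => h a (s - m)) (b + m) := by rw [hfun]
    _ = deriv (fun u => h a u) (b + m - m) := deriv_comp_sub_const (fun u => h a u) (m : ℝ) (b + m)
    _ = pd2 h a b := by rw [add_sub_cancel_right]; rfl

end Per

lemma bound_of_periodic {f : ℝ → ℝ} (hc : Continuous f) (hf : ∀ t, f (t + 1) = f t) :
    ∃ C, ∀ t, |f t| ≤ C := by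
  obtain ⟨C, hC⟩ := (isCompact_Icc (a := (0 : ℝ)) (b := 1)).exists_bound_of_continuousOn
    hc.continuousOn
  refine ⟨C, fun t => ?_⟩
  have hp : Function.Periodic f 1 := hf
  have h1 : f (t - (⌊t⌋ : ℤ) * 1) = f t := hp.sub_int_mul_eq ⌊t⌋
  have h2 : f t = f (Int.fract t) := by
    rw [← h1]; congr 1; rw [Int.fract]; ring
  rw [h2]
  exact hC _ ⟨Int.fract_nonneg t, le_of_lt (Int.fract_lt_one t)⟩

section Coercive
variable {h : ℝ → ℝ → ℝ} (hC2 : ContDiff ℝ 2 (Function.uncurry h))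
  (hper : ∀ a b : ℝ, h (a + 1) (b + 1) = h a b)
  {δ : ℝ} (hδpos : 0 < δ) (hδ' : ∀ a b : ℝ, pd12 h a b ≤ -δ)

set_option linter.unusedSectionVars false in
include hC2 hper hδpos hδ' in
lemma coercive :
    ∃ B M : ℝ, 0 ≤ M ∧ ∀ ξ η : ℝ, B - M * |η - ξ| + δ / 2 * (η - ξ) ^ 2 ≤ h ξ η := by
  obtain ⟨C1, hC1⟩ := bound_of_periodic
    (hC2.continuous.comp (continuous_id.prodMk continuous_id))
    (fun t => hper t t)
  obtain ⟨M, hM⟩ := bound_of_periodic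
    ((continuous_pd2_pair hC2).comp (continuous_id.prodMk continuous_id))
    (fun t => by simpa using pd2_shift hper 1 t t)
  simp only [Function.comp_apply, Function.uncurry_apply_pair, id_eq] at hC1 hM
  have hM0 : 0 ≤ M := le_trans (abs_nonneg _) (hM 0)
  refine ⟨-C1, M, hM0, fun ξ η => ?_⟩
  have hsq : ∀ t : ℝ, HasDerivAt (fun t : ℝ => δ / 2 * (t - ξ) ^ 2) (δ * (t - ξ)) t := by
    intro t
    have := (((hasDerivAt_id t).sub_const ξ).fun_pow 2).const_mul (δ / 2)
    exact this.congr_deriv (by rw [id_eq]; push_cast; ring)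
  have hMl : ∀ t : ℝ, HasDerivAt (fun t : ℝ => M * t) M t := fun t => by
    simpa using (hasDerivAt_id t).const_mul M
  rcases lt_trichotomy ξ η with hlt | heq | hgt
  · set g : ℝ → ℝ := fun t => h ξ t + M * t - δ / 2 * (t - ξ) ^ 2 with hg
    have hg' : ∀ t : ℝ, HasDerivAt g (pd2 h ξ t + M - δ * (t - ξ)) t := fun t =>
      ((hasDerivAt_h2 hC2 ξ t).add (hMl t)).sub (hsq t)
    obtain ⟨c, hc, hceq⟩ := exists_hasDerivAt_eq_slope g _ hlt
      (fun t _ => (hg' t).continuousAt.continuousWithinAt) (fun t _ => hg' t)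
    obtain ⟨e, he, heeq⟩ := exists_hasDerivAt_eq_slope (fun s => pd2 h s c) _ hc.1
      (fun s _ => (hasDerivAt_pd2 hC2 s c).continuousAt.continuousWithinAt)
      (fun s _ => hasDerivAt_pd2 hC2 s c)
    have h1 : (pd2 h c c - pd2 h ξ c) / (c - ξ) ≤ -δ := heeq ▸ hδ' e c
    have hcξ : 0 < c - ξ := sub_pos.2 hc.1
    have h2 : pd2 h c c - pd2 h ξ c ≤ -δ * (c - ξ) := by
      rw [div_le_iff₀ hcξ] at h1; linarith
    have h3 : -M ≤ pd2 h c c := by have := abs_le.1 (hM c); linarith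
    have hgc : 0 ≤ pd2 h ξ c + M - δ * (c - ξ) := by linarith
    rw [hceq] at hgc
    have hηξ : 0 < η - ξ := sub_pos.2 hlt
    have h4 : g ξ ≤ g η := by
      have := mul_nonneg hgc (le_of_lt hηξ)
      rw [div_mul_cancel₀] at this <;> [linarith; positivity]
    have habs : |η - ξ| = η - ξ := abs_of_pos hηξ
    have hd : -C1 ≤ h ξ ξ := by have := abs_le.1 (hC1 ξ); linarith
    simp only [hg] at h4
    rw [habs]; nlinarith
  · subst heq; simp only [sub_self, abs_zero]
    have := abs_le.1 (hC1 ξ); nlinarith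
  · set g : ℝ → ℝ := fun t => h ξ t - M * t - δ / 2 * (t - ξ) ^ 2 with hg
    have hg' : ∀ t : ℝ, HasDerivAt g (pd2 h ξ t - M - δ * (t - ξ)) t := fun t =>
      ((hasDerivAt_h2 hC2 ξ t).sub (hMl t)).sub (hsq t)
    obtain ⟨c, hc, hceq⟩ := exists_hasDerivAt_eq_slope g _ hgt
      (fun t _ => (hg' t).continuousAt.continuousWithinAt) (fun t _ => hg' t)
    obtain ⟨e, he, heeq⟩ := exists_hasDerivAt_eq_slope (fun s => pd2 h s c) _ hc.2
      (fun s _ => (hasDerivAt_pd2 hC2 s c).continuousAt.continuousWithinAt)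
      (fun s _ => hasDerivAt_pd2 hC2 s c)
    have h1 : (pd2 h ξ c - pd2 h c c) / (ξ - c) ≤ -δ := heeq ▸ hδ' e c
    have hcξ : 0 < ξ - c := sub_pos.2 hc.2
    have h2 : pd2 h ξ c - pd2 h c c ≤ -δ * (ξ - c) := by
      rw [div_le_iff₀ hcξ] at h1; linarith
    have h3 : pd2 h c c ≤ M := by have := abs_le.1 (hM c); linarith
    have hgc : pd2 h ξ c - M - δ * (c - ξ) ≤ 0 := by linarith
    rw [hceq] at hgc
    have hηξ : 0 < ξ - η := sub_pos.2 hgt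
    have h4 : g ξ ≤ g η := by
      have := mul_nonpos_of_nonpos_of_nonneg hgc (le_of_lt hηξ)
      rw [div_mul_cancel₀] at this <;> [linarith; positivity]
    have habs : |η - ξ| = ξ - η := by rw [abs_sub_comm]; exact abs_of_pos hηξ
    have hd : -C1 ≤ h ξ ξ := by have := abs_le.1 (hC1 ξ); linarith
    simp only [hg] at h4
    rw [habs]; nlinarith

end Coercive

section Cfg
variable (p : ℤ) {q : ℕ} (hq : 0 < q)
include hq

lemma emod_toNat_lt (n : ℤ) : (n % (q : ℤ)).toNat < q := by
  have h1 : 0 ≤ n % (q : ℤ) := Int.emod_nonneg n (by exact_mod_cast hq.ne')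
  have h2 : n % (q : ℤ) < q := Int.emod_lt_of_pos n (by exact_mod_cast hq)
  omega

noncomputable def extCfg (v : Fin q → ℝ) : ℤ → ℝ :=
  fun n => v ⟨(n % (q : ℤ)).toNat, emod_toNat_lt hq n⟩ + (p : ℝ) * ((n / (q : ℤ) : ℤ) : ℝ)

lemma isConfig_extCfg (v : Fin q → ℝ) : IsConfig p q (extCfg p hq v) := by
  intro n
  have e1 : (n + (q : ℤ)) % (q : ℤ) = n % q := by
    simpa using Int.add_mul_emod_self_left (a := n) (b := (q : ℤ)) (c := 1)
  have e3 : (n + (q : ℤ)) / (q : ℤ) = n / q + 1 := by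
    have := Int.add_mul_ediv_right n 1 (c := (q : ℤ)) (by exact_mod_cast hq.ne')
    simpa using this
  unfold extCfg
  simp only [e1, e3]
  push_cast
  ring

omit hq in
lemma config_add_mul {x : ℤ → ℝ} (hx : IsConfig p q x) (n m : ℤ) :
    x (n + q * m) = x n + p * m := by
  induction m using Int.induction_on with
  | zero => simp
  | succ i ih =>
    have e : n + (q : ℤ) * ((i : ℤ) + 1) = (n + q * i) + q := by ring
    rw [e, hx (n + q * i), ih]; push_cast; ring
  | pred i ih =>
    have e : n + (q : ℤ) * (-(i : ℤ)) = (n + q * (-(i : ℤ) - 1)) + q := by ring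
    rw [e, hx (n + q * (-(i : ℤ) - 1))] at ih
    have e2 : x (n + (q : ℤ) * (-(i : ℤ) - 1)) = x n + (p : ℝ) * ((-(i : ℝ)) : ℝ) - p := by
      push_cast at ih ⊢; linarith
    rw [e2]; push_cast; ring

lemma extCfg_natCast (v : Fin q → ℝ) (k : ℕ) (hk : k < q) :
    extCfg p hq v (k : ℤ) = v ⟨k, hk⟩ := by
  unfold extCfg
  have e1 : (k : ℤ) % (q : ℤ) = k := Int.emod_eq_of_lt (by positivity) (by exact_mod_cast hk)
  have e2 : (k : ℤ) / (q : ℤ) = 0 := Int.ediv_eq_zero_of_lt (by positivity) (by exact_mod_cast hk)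
  simp only [e1, e2, Int.toNat_natCast, Int.cast_zero, mul_zero, add_zero]

lemma extCfg_restrict {x : ℤ → ℝ} (hx : IsConfig p q x) :
    extCfg p hq (fun i : Fin q => x ((i : ℕ) : ℤ)) = x := by
  funext n
  unfold extCfg
  have h1 : 0 ≤ n % (q : ℤ) := Int.emod_nonneg n (by exact_mod_cast hq.ne')
  have h2 : (((n % (q : ℤ)).toNat : ℕ) : ℤ) = n % q := Int.toNat_of_nonneg h1
  have h3 : x (n % (q : ℤ) + q * (n / q)) = x (n % (q : ℤ)) + (p : ℝ) * ((n / (q : ℤ) : ℤ) : ℝ) :=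
    config_add_mul p hx (n % (q : ℤ)) (n / (q : ℤ))
  rw [Int.emod_add_mul_ediv n (q : ℤ)] at h3
  simp only [h2]
  rw [h3]

omit hq in
lemma W_translate {h : ℝ → ℝ → ℝ} (hper : ∀ a b : ℝ, h (a + 1) (b + 1) = h a b)
    (y : ℤ → ℝ) (m : ℤ) : W h q (fun n => y n - m) = W h q y := by
  unfold W
  refine Finset.sum_congr rfl fun k _ => ?_
  have := hshift hper (-m) (y k) (y (k + 1))
  push_cast at this
  have e1 : y (k : ℤ) + -(m : ℝ) = y k - m := by ring
  have e2 : y ((k : ℤ) + 1) + -(m : ℝ) = y ((k : ℤ) + 1) - m := by ring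
  rw [e1, e2] at this
  exact this

omit hq in
lemma isConfig_translate {x : ℤ → ℝ} (hx : IsConfig p q x) (m : ℤ) :
    IsConfig p q (fun n => x n - m) := by
  intro n; simp only [hx n]; ring

end Cfg

section Stat
variable {h : ℝ → ℝ → ℝ} (hper : ∀ a b : ℝ, h (a + 1) (b + 1) = h a b)
  {p : ℤ} {q : ℕ}
include hper

lemma stat_shift {x : ℤ → ℝ} (hx : IsConfig p q x) (k : ℤ) :
    pd2 h (x (k + q - 1)) (x (k + q)) + pd1 h (x (k + q)) (x (k + q + 1))
      = pd2 h (x (k - 1)) (x k) + pd1 h (x k) (x (k + 1)) := by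
  have e1 : x (k + q - 1) = x (k - 1) + p := by
    have := hx (k - 1); rw [show k - 1 + (q : ℤ) = k + q - 1 from by ring] at this; exact this
  have e2 : x (k + q) = x k + p := hx k
  have e3 : x (k + q + 1) = x (k + 1) + p := by
    have := hx (k + 1); rw [show k + 1 + (q : ℤ) = k + q + 1 from by ring] at this; exact this
  rw [e1, e2, e3, pd2_shift hper p, pd1_shift hper p]

lemma stat_all {x : ℤ → ℝ} (hx : IsConfig p q x) (hq : 0 < q)
    (base : ∀ j : ℕ, j < q →
      pd2 h (x ((j : ℤ) - 1)) (x (j : ℤ)) + pd1 h (x (j : ℤ)) (x ((j : ℤ) + 1)) = 0) :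
    ∀ k : ℤ, pd2 h (x (k - 1)) (x k) + pd1 h (x k) (x (k + 1)) = 0 := by
  set L : ℤ → ℝ := fun k => pd2 h (x (k - 1)) (x k) + pd1 h (x k) (x (k + 1)) with hL
  have hshiftL : ∀ k : ℤ, L (k + q) = L k := fun k => stat_shift hper hx k
  have hmul : ∀ (m : ℤ) (k : ℤ), L (k + q * m) = L k := by
    intro m
    induction m using Int.induction_on with
    | zero => simp
    | succ i ih =>
      intro k
      have e : k + (q : ℤ) * ((i : ℤ) + 1) = (k + q * i) + q := by ring
      rw [e, hshiftL, ih]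
    | pred i ih =>
      intro k
      have e : k + (q : ℤ) * (-(i : ℤ)) = (k + q * (-(i : ℤ) - 1)) + q := by ring
      have h2 := hshiftL (k + q * (-(i : ℤ) - 1))
      rw [← e, ih] at h2
      rw [← h2]
  intro k
  have hk : L k = L (k % q) := by
    conv_lhs => rw [(Int.emod_add_mul_ediv k q).symm]
    exact hmul _ _
  have hlt := emod_toNat_lt hq k
  have hcast : (((k % (q : ℤ)).toNat : ℕ) : ℤ) = k % q :=
    Int.toNat_of_nonneg (Int.emod_nonneg k (by exact_mod_cast hq.ne'))
  have := base (k % (q : ℤ)).toNat hlt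
  rw [hcast] at this
  exact hk.trans this

end Stat

/-- Existence of (p,q)-minimizers under a uniform twist condition, and
stationarity of every global minimizer. -/
theorem exists_pq_minimizer
    (p : ℤ) (q : ℕ) (hq : 0 < q) (hpq : IsCoprime p (q : ℤ))
    (h : ℝ → ℝ → ℝ) (hC2 : ContDiff ℝ 2 (Function.uncurry h))
    (htwist : ∀ a b : ℝ, pd12 h a b < 0)
    (hper : ∀ a b : ℝ, h (a + 1) (b + 1) = h a b)
    (hδ : ∃ δ : ℝ, 0 < δ ∧ ∀ a b : ℝ, pd12 h a b ≤ -δ) :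
    (∃ x : ℤ → ℝ, IsConfig p q x ∧ ∀ y : ℤ → ℝ, IsConfig p q y → W h q x ≤ W h q y) ∧
    (∀ x : ℤ → ℝ, IsConfig p q x → (∀ y : ℤ → ℝ, IsConfig p q y → W h q x ≤ W h q y) →
      Stationary h x) := by
  obtain ⟨δ, hδpos, hδ'⟩ := hδ
  obtain ⟨B, M, hM0, hcoer⟩ := coercive hC2 hper hδpos hδ'
  constructor
  · -- existence
    set G : (Fin q → ℝ) → ℝ := fun v => W h q (extCfg p hq v) with hG
    have hGc : Continuous G := by
      have hGeq : G = fun v => ∑ k ∈ Finset.range q,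
          h (extCfg p hq v (k : ℤ)) (extCfg p hq v ((k : ℤ) + 1)) := rfl
      rw [hGeq]
      refine continuous_finset_sum _ fun k _ => ?_
      have c1 : Continuous fun v : Fin q → ℝ => extCfg p hq v (k : ℤ) := by
        unfold extCfg; exact (continuous_apply _).add continuous_const
      have c2 : Continuous fun v : Fin q → ℝ => extCfg p hq v ((k : ℤ) + 1) := by
        unfold extCfg; exact (continuous_apply _).add continuous_const
      exact (hC2.continuous.comp (c1.prodMk c2)).congr fun v => rfl
    set v0 : Fin q → ℝ := fun _ => 0 with hv0
    set c₀ : ℝ := G v0 with hc₀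
    set K : Set (Fin q → ℝ) := ((fun v : Fin q → ℝ => v ⟨0, hq⟩) ⁻¹' Set.Icc (0 : ℝ) 1) ∩
      {v | G v ≤ c₀} with hK
    have hKc : IsClosed K :=
      (isClosed_Icc.preimage (continuous_apply _)).inter (isClosed_le hGc continuous_const)
    set B0 : ℝ := B - M ^ 2 / (2 * δ) with hB0
    have hB0le : ∀ ξ η : ℝ, B0 ≤ h ξ η := by
      intro ξ η
      have h1 := hcoer ξ η
      have h2 : (0 : ℝ) ≤ (δ * |η - ξ| - M) ^ 2 := sq_nonneg _
      have h3 := sq_abs (η - ξ)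
      have h3' : δ ^ 2 * |η - ξ| ^ 2 = δ ^ 2 * (η - ξ) ^ 2 := by rw [sq_abs]
      have hkey : M ^ 2 / (2 * δ) * (2 * δ) = M ^ 2 :=
        div_mul_cancel₀ _ (ne_of_gt (by positivity : (0 : ℝ) < 2 * δ))
      have e1 : 2 * δ * (B - M * |η - ξ| + δ / 2 * (η - ξ) ^ 2) ≤ 2 * δ * h ξ η :=
        mul_le_mul_of_nonneg_left h1 (by positivity)
      have e3 : 2 * δ * (B - M ^ 2 / (2 * δ)) ≤ 2 * δ * h ξ η := by
        nlinarith [e1, h2, h3', hkey]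
      have e4 := (mul_le_mul_iff_of_pos_left (by positivity : (0 : ℝ) < 2 * δ)).1 e3
      rw [hB0]; exact e4
    set c₁ : ℝ := c₀ - ((q - 1 : ℕ) : ℝ) * B0 with hc₁
    set R : ℝ := max 1 ((M + |c₁| + |B| + 1) * 2 / δ) with hR
    have hR0 : (0 : ℝ) ≤ R := le_trans zero_le_one (le_max_left _ _)
    have hKbd : ∀ v ∈ K, ∀ i : Fin q, |v i| ≤ q * R + 1 := by
      intro v hv i
      set x : ℤ → ℝ := extCfg p hq v with hx
      have hsum : ∑ k ∈ Finset.range q, h (x (k : ℤ)) (x ((k : ℤ) + 1)) ≤ c₀ := hv.2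
      have hterm : ∀ j ∈ Finset.range q, h (x (j : ℤ)) (x ((j : ℤ) + 1)) ≤ c₁ := by
        intro j hj
        have he := Finset.add_sum_erase (Finset.range q)
          (fun k : ℕ => h (x (k : ℤ)) (x ((k : ℤ) + 1))) hj
        have hge : ((q - 1 : ℕ) : ℝ) * B0
            ≤ ∑ k ∈ (Finset.range q).erase j, h (x (k : ℤ)) (x ((k : ℤ) + 1)) := by
          have hs := Finset.sum_le_sum (s := (Finset.range q).erase j)
            (f := fun _ : ℕ => B0) (g := fun k : ℕ => h (x (k : ℤ)) (x ((k : ℤ) + 1)))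
            (fun k _ => hB0le _ _)
          rw [Finset.sum_const, Finset.card_erase_of_mem hj, Finset.card_range,
            nsmul_eq_mul] at hs
          exact hs
        rw [hc₁]
        linarith [he ▸ hsum]
      have hdiff : ∀ j : ℕ, j < q → |x ((j : ℤ) + 1) - x (j : ℤ)| ≤ R := by
        intro j hj
        by_contra hcon
        push_neg at hcon
        set d : ℝ := x ((j : ℤ) + 1) - x (j : ℤ) with hd
        clear_value d
        have h1 : (1 : ℝ) ≤ |d| := le_trans (le_max_left _ _) hcon.le
        have h2 : (M + |c₁| + |B| + 1) * 2 / δ ≤ |d| := le_trans (le_max_right _ _) hcon.le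
        have h3 : (M + |c₁| + |B| + 1) * 2 ≤ δ * |d| := by
          rw [div_le_iff₀ hδpos] at h2; linarith
        have h4 := hcoer (x (j : ℤ)) (x ((j : ℤ) + 1))
        rw [← hd] at h4
        have h5 := hterm j (Finset.mem_range.2 hj)
        have h6 : (0 : ℝ) ≤ |c₁| + |B| + 1 := by positivity
        have habs2 : δ * |d| * |d| = δ * d ^ 2 := by rw [mul_assoc, abs_mul_abs_self]; ring
        have P : (M + |c₁| + |B| + 1) * 2 * |d| ≤ δ * d ^ 2 := by
          have hh := mul_le_mul_of_nonneg_right h3 (abs_nonneg d)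
          linarith [hh, habs2]
        have Q : (0 : ℝ) ≤ (|c₁| + |B| + 1) * (|d| - 1) := mul_nonneg h6 (sub_nonneg.2 h1)
        nlinarith [P, Q, le_abs_self c₁, neg_abs_le B]
      have htel : ∀ k : ℕ, k ≤ q → |x (k : ℤ) - x (0 : ℤ)| ≤ (k : ℝ) * R := by
        intro k
        induction k with
        | zero => intro _; simp
        | succ n ih =>
          intro hk
          have h1 := ih (Nat.le_of_succ_le hk)
          have h2 := hdiff n (by omega)
          have e : ((n + 1 : ℕ) : ℤ) = (n : ℤ) + 1 := by push_cast; ring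
          rw [e]
          have h3 := abs_sub_le (x ((n : ℤ) + 1)) (x (n : ℤ)) (x (0 : ℤ))
          push_cast
          linarith
      have hx0 : x (0 : ℤ) = v ⟨0, hq⟩ := by
        have := extCfg_natCast p hq v 0 hq
        simpa using this
      have hxi : x ((i : ℕ) : ℤ) = v i := by
        have := extCfg_natCast p hq v i i.isLt
        simpa using this
      have h01 : |v ⟨0, hq⟩| ≤ 1 := by
        have hh := hv.1
        rw [abs_le]
        exact ⟨by linarith [hh.1], hh.2⟩
      have h02 := htel i (le_of_lt i.isLt)
      rw [hxi, hx0] at h02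
      have h03 : ((i : ℕ) : ℝ) * R ≤ (q : ℝ) * R :=
        mul_le_mul_of_nonneg_right (by exact_mod_cast (le_of_lt i.isLt)) hR0
      calc |v i| = |(v i - v ⟨0, hq⟩) + v ⟨0, hq⟩| := by ring_nf
        _ ≤ |v i - v ⟨0, hq⟩| + |v ⟨0, hq⟩| := abs_add_le _ _
        _ ≤ (q : ℝ) * R + 1 := by linarith
    have hKbdd : Bornology.IsBounded K := by
      rw [isBounded_iff_forall_norm_le]
      refine ⟨q * R + 1, fun v hv => ?_⟩
      rw [pi_norm_le_iff_of_nonneg (by positivity)]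
      intro i
      rw [Real.norm_eq_abs]
      exact hKbd v hv i
    have hKcmp : IsCompact K := Metric.isCompact_of_isClosed_isBounded hKc hKbdd
    have hK0 : v0 ∈ K := ⟨by simp [hv0], by simp only [Set.mem_setOf_eq, hc₀]; exact le_rfl⟩
    obtain ⟨vm, hvmK, hvmin⟩ := hKcmp.exists_isMinOn ⟨v0, hK0⟩ hGc.continuousOn
    refine ⟨extCfg p hq vm, isConfig_extCfg p hq vm, ?_⟩
    intro y hy
    set m : ℤ := ⌊y 0⌋ with hm
    set y' : ℤ → ℝ := fun n => y n - m with hy'def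
    have hy'c : IsConfig p q y' := isConfig_translate p hy m
    have hWy' : W h q y' = W h q y := W_translate hper y m
    set v' : Fin q → ℝ := fun i => y' ((i : ℕ) : ℤ) with hv'
    have hext : extCfg p hq v' = y' := extCfg_restrict p hq hy'c
    have hGv' : G v' = W h q y' := by rw [hG]; simp only; rw [hext]
    have hv'0 : v' ⟨0, hq⟩ ∈ Set.Icc (0 : ℝ) 1 := by
      have hvv : v' ⟨0, hq⟩ = y 0 - (⌊y 0⌋ : ℝ) := rfl
      rw [hvv]
      constructor
      · linarith [Int.floor_le (y 0)]
      · linarith [Int.lt_floor_add_one (y 0)]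
    rcases le_or_gt (G v') c₀ with hle | hlt
    · have hmin2 : G vm ≤ G v' := isMinOn_iff.1 hvmin _ ⟨hv'0, hle⟩
      calc W h q (extCfg p hq vm) = G vm := rfl
        _ ≤ G v' := hmin2
        _ = W h q y := by rw [hGv', hWy']
    · have h1 : G vm ≤ c₀ := hvmK.2
      have h2 : G vm < G v' := lt_of_le_of_lt h1 hlt
      calc W h q (extCfg p hq vm) = G vm := rfl
        _ ≤ G v' := h2.le
        _ = W h q y := by rw [hGv', hWy']

  · -- stationarity
    intro x hx hmin
    have base : ∀ j : ℕ, j < q →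
        pd2 h (x ((j : ℤ) - 1)) (x (j : ℤ)) + pd1 h (x (j : ℤ)) (x ((j : ℤ) + 1)) = 0 := by
      intro j hj
      set χ : ℤ → ℝ := fun n => if n % (q : ℤ) = (j : ℤ) then 1 else 0 with hχ
      have hχper : ∀ n : ℤ, χ (n + q) = χ n := by
        intro n
        have e1 : (n + (q : ℤ)) % (q : ℤ) = n % q := by
          simpa using Int.add_mul_emod_self_left (a := n) (b := (q : ℤ)) (c := 1)
        simp only [hχ, e1]
      have hyconf : ∀ t : ℝ, IsConfig p q (fun n => x n + t * χ n) := by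
        intro t n
        simp only
        rw [hx n, hχper n]; ring
      set φ : ℝ → ℝ := fun t => ∑ k ∈ Finset.range q,
        h (x (k : ℤ) + t * χ (k : ℤ)) (x ((k : ℤ) + 1) + t * χ ((k : ℤ) + 1)) with hφ
      have hφmin : ∀ t, φ 0 ≤ φ t := by
        intro t
        have h1 : φ 0 = W h q x := by
          simp only [hφ]
          exact Finset.sum_congr rfl fun k _ => by rw [zero_mul, add_zero, zero_mul, add_zero]
        have h2 : φ t = W h q (fun n => x n + t * χ n) := rfl
        rw [h1, h2]
        exact hmin _ (hyconf t)
      have hder : HasDerivAt φ (∑ k ∈ Finset.range q,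
          (χ (k : ℤ) * pd1 h (x (k : ℤ)) (x ((k : ℤ) + 1))
            + χ ((k : ℤ) + 1) * pd2 h (x (k : ℤ)) (x ((k : ℤ) + 1)))) 0 :=
        HasDerivAt.fun_sum fun k _ => hasDerivAt_line hC2 _ _ _ _
      have hloc : IsLocalMin φ 0 := Filter.Eventually.of_forall hφmin
      have hS : (∑ k ∈ Finset.range q,
          (χ (k : ℤ) * pd1 h (x (k : ℤ)) (x ((k : ℤ) + 1))
            + χ ((k : ℤ) + 1) * pd2 h (x (k : ℤ)) (x ((k : ℤ) + 1)))) = 0 :=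
        hloc.hasDerivAt_eq_zero hder
      set A : ℕ → ℝ := fun k => pd1 h (x (k : ℤ)) (x ((k : ℤ) + 1)) with hA
      set Bf : ℕ → ℝ := fun k => pd2 h (x (k : ℤ)) (x ((k : ℤ) + 1)) with hBf
      set j' : ℕ := if j = 0 then q - 1 else j - 1 with hj'def
      have hj' : j' < q := by rw [hj'def]; split <;> omega
      have e1 : ∀ k ∈ Finset.range q, χ (k : ℤ) * A k = if k = j then A k else 0 := by
        intro k hk
        have hk' := Finset.mem_range.1 hk
        have em : (k : ℤ) % (q : ℤ) = k :=
          Int.emod_eq_of_lt (by positivity) (by exact_mod_cast hk')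
        simp only [hχ, em, Int.natCast_inj]
        split_ifs <;> simp
      have e2 : ∀ k ∈ Finset.range q, χ ((k : ℤ) + 1) * Bf k = if k = j' then Bf k else 0 := by
        intro k hk
        have hk' := Finset.mem_range.1 hk
        have hcond : (((k : ℤ) + 1) % (q : ℤ) = (j : ℤ)) ↔ k = j' := by
          by_cases hke : k + 1 = q
          · have heq : ((k : ℤ) + 1) = (q : ℤ) := by omega
            rw [heq, Int.emod_self]
            rw [hj'def]
            split_ifs with hj0 <;> omega
          · have hlt2 : k + 1 < q := by omega
            have heq : ((k : ℤ) + 1) % (q : ℤ) = (k : ℤ) + 1 :=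
              Int.emod_eq_of_lt (by positivity) (by exact_mod_cast hlt2)
            rw [heq, hj'def]
            split_ifs with hj0 <;> omega
        simp only [hχ]
        rw [if_congr hcond rfl rfl]
        split_ifs <;> simp
      have hsplit : A j + Bf j' = 0 := by
        rw [← hS, Finset.sum_add_distrib, Finset.sum_congr rfl e1, Finset.sum_congr rfl e2,
          Finset.sum_ite_eq' (Finset.range q) j A, Finset.sum_ite_eq' (Finset.range q) j' Bf,
          if_pos (Finset.mem_range.2 hj), if_pos (Finset.mem_range.2 hj')]
      by_cases hj0 : j = 0
      · subst hj0
        have hq1 : j' = q - 1 := by simp [hj'def]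
        have e3 : ((q - 1 : ℕ) : ℤ) = (q : ℤ) - 1 := by omega
        have e4 : x ((q : ℤ) - 1 + 1) = x 0 + p := by
          have hh := hx 0
          rw [zero_add] at hh
          rw [show (q : ℤ) - 1 + 1 = (q : ℤ) by ring]
          exact hh
        have e5 : x ((q : ℤ) - 1) = x (-1) + p := by
          have hh := hx (-1)
          rw [show (-1 : ℤ) + (q : ℤ) = (q : ℤ) - 1 by ring] at hh
          exact hh
        have e6 : Bf j' = pd2 h (x (-1)) (x 0) := by
          rw [hBf, hq1]
          simp only
          rw [e3, e4, e5, pd2_shift hper p]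
        rw [e6] at hsplit
        have e7 : A 0 = pd1 h (x 0) (x 1) := by
          rw [hA]; norm_num
        rw [e7] at hsplit
        show pd2 h (x (((0 : ℕ) : ℤ) - 1)) (x ((0 : ℕ) : ℤ))
          + pd1 h (x ((0 : ℕ) : ℤ)) (x (((0 : ℕ) : ℤ) + 1)) = 0
        norm_num
        linarith [hsplit]
      · have hq1 : j' = j - 1 := by simp [hj'def, hj0]
        have e3 : ((j - 1 : ℕ) : ℤ) = (j : ℤ) - 1 := by omega
        have e6 : Bf j' = pd2 h (x ((j : ℤ) - 1)) (x (j : ℤ)) := by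
          rw [hBf, hq1]
          simp only
          rw [e3, show (j : ℤ) - 1 + 1 = (j : ℤ) by ring]
        rw [e6] at hsplit
        linarith [hsplit]
    exact stat_all hper hx hq base
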